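/- arXiv:1510.08980 — 6 statements merged into one kernel-verified Lean document; each statement's English description precedes it below -/
import Mathlib

section
/- For every odd integer r ≥ 3 and every x ∈ [0,1], f(x,r-1)·f(x,r+1) ≥ (f(x,r))^2, with strict inequality for 0 < x < 1. In particular x^2(1-x)^2 (x^{r-2}+(1-x)^{r-2})(x^r+(1-x)^r) ≥ x^2(1-x)^2 ((1-x)^{r-1} - x^{r-1})^2 for x ∈ [0,1]. -/
noncomputable def f (x : ℝ) (j : ℕ) : ℝ := (-x)^j * (1-x) + (1-x)^j * x

lemma key_f (m : ℕ) (hm : Odd m) (x : ℝ) :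
    f x (m+1) * f x (m+3) - (f x (m+2))^2 = x^(m+2) * (1-x)^(m+2) := by
  have h : (-x)^m = -x^m := hm.neg_pow x
  simp only [f, pow_succ, show m+3 = m+1+1+1 from rfl, show m+2 = m+1+1 from rfl, h]
  ring

lemma key_poly (m : ℕ) (x : ℝ) :
    x^2 * (1-x)^2 * (x^m + (1-x)^m) * (x^(m+2) + (1-x)^(m+2))
      - x^2 * (1-x)^2 * ((1-x)^(m+1) - x^(m+1))^2 = x^(m+2) * (1-x)^(m+2) := by
  simp only [pow_succ, show m+2 = m+1+1 from rfl]
  ring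

theorem stmt_3 (r : ℕ) (hr : Odd r) (hr3 : 3 ≤ r) :
    (∀ x ∈ Set.Icc (0:ℝ) 1, (f x r)^2 ≤ f x (r-1) * f x (r+1)) ∧
    (∀ x : ℝ, 0 < x → x < 1 → (f x r)^2 < f x (r-1) * f x (r+1)) ∧
    (∀ x ∈ Set.Icc (0:ℝ) 1,
      x^2 * (1-x)^2 * ((1-x)^(r-1) - x^(r-1))^2 ≤
        x^2 * (1-x)^2 * (x^(r-2) + (1-x)^(r-2)) * (x^r + (1-x)^r)) := by
  obtain ⟨m, hm⟩ : ∃ m, r = m + 2 := ⟨r - 2, by omega⟩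
  have hmo : Odd m := by
    rcases hr with ⟨k, hk⟩; exact ⟨k - 1, by omega⟩
  subst hm
  have h1 : m + 2 - 1 = m + 1 := by omega
  have h2 : m + 2 - 2 = m := by omega
  have h3 : m + 2 + 1 = m + 3 := by omega
  rw [h1, h2, h3]
  refine ⟨fun x hx => ?_, fun x hx0 hx1 => ?_, fun x hx => ?_⟩
  · have := key_f m hmo x
    nlinarith [pow_nonneg hx.1 (m+2), pow_nonneg (by linarith [hx.2] : (0:ℝ) ≤ 1 - x) (m+2),
      mul_nonneg (pow_nonneg hx.1 (m+2)) (pow_nonneg (by linarith [hx.2] : (0:ℝ) ≤ 1 - x) (m+2))]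
  · have := key_f m hmo x
    have hp : 0 < x^(m+2) * (1-x)^(m+2) :=
      mul_pos (pow_pos hx0 _) (pow_pos (by linarith) _)
    linarith
  · have := key_poly m x
    have hp : 0 ≤ x^(m+2) * (1-x)^(m+2) :=
      mul_nonneg (pow_nonneg hx.1 _) (pow_nonneg (by linarith [hx.2]) _)
    linarith
end

section
/- Let r, s ≥ 3 be odd integers, let p ∈ (0, 1/2), q ∈ (1/2, 1), w > 0, and α, β > 0 with α·β ≥ 1/2. With f(x,j) = (-x)^j(1-x) + (1-x)^j x, the function F(y) = α · (1/((r-1)!(s+1)!)) · f(p,r-1) f(q,s+1) w^{s+1} y^{r-1} + (1/(r! s!)) · f(p,r) f(q,s) w^s y^r + β · (1/((r+1)!(s-1)!)) · f(p,r+1) f(q,s-1) w^{s-1} y^{r+1} is strictly increasing in y on (0, ∞). -/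
open Nat Set

theorem f_mul_f_add_two (x : ℝ) (j : ℕ) :
    f x j * f x (j + 2) = f x (j + 1) ^ 2 - (-x) ^ (j + 1) * (1 - x) ^ (j + 1) := by
  simp only [f]; ring

theorem f_pos_of_even {x : ℝ} (hx₀ : 0 < x) (hx₁ : x < 1) {j : ℕ} (hj : Even j) :
    0 < f x j := by
  have : 0 < 1 - x := by linarith
  rw [f, hj.neg_pow]; positivity

theorem sq_f_lt_f_mul_f {x : ℝ} (hx₀ : 0 < x) (hx₁ : x < 1) {j : ℕ} (hj : Even j) :
    f x (j + 1) ^ 2 < f x j * f x (j + 2) := by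
  have : 0 < 1 - x := by linarith
  rw [f_mul_f_add_two, hj.add_one.neg_pow]
  have : 0 < x ^ (j + 1) * (1 - x) ^ (j + 1) := by positivity
  linarith

theorem sq_mul_pow_lt_of_sq_lt {a b c w : ℝ} (k : ℕ) (hw : w ≠ 0) (h : b ^ 2 < a * c) :
    (b * w ^ (k + 1)) ^ 2 < a * w ^ k * (c * w ^ (k + 2)) := by
  calc (b * w ^ (k + 1)) ^ 2 = b ^ 2 * (w ^ (k + 1)) ^ 2 := by ring
    _ < a * c * (w ^ (k + 1)) ^ 2 := by gcongr
    _ = a * w ^ k * (c * w ^ (k + 2)) := by ring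

theorem mul_sq_div_factorial_lt {c : ℕ → ℝ} {k : ℕ} (h : c (k + 1) ^ 2 < c k * c (k + 2)) :
    ((k : ℝ) + 1) * (c (k + 1) / (k + 1)!) ^ 2
      < ((k : ℝ) + 2) * (c k / k ! * (c (k + 2) / (k + 2)!)) := by
  have hk : (0 : ℝ) < (k + 1) * k ! ^ 2 := by positivity
  have e₁ : ((k + 1)! : ℝ) = (k + 1) * k ! := by push_cast [factorial_succ]; ring
  have e₂ : ((k + 2)! : ℝ) = (k + 2) * ((k + 1) * k !) := by push_cast [factorial_succ]; ring
  calc ((k : ℝ) + 1) * (c (k + 1) / (k + 1)!) ^ 2 = c (k + 1) ^ 2 / ((k + 1) * k ! ^ 2) := by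
        rw [e₁]; field_simp
    _ < c k * c (k + 2) / ((k + 1) * k ! ^ 2) := div_lt_div_of_pos_right h hk
    _ = ((k : ℝ) + 2) * (c k / k ! * (c (k + 2) / (k + 2)!)) := by
        rw [e₂]; field_simp

theorem quadratic_pos_of_sq_lt {a b c : ℝ} (hc : 0 < c) (hdisc : b ^ 2 < 4 * a * c) (t : ℝ) :
    0 < a + b * t + c * t ^ 2 := by
  nlinarith [sq_nonneg (2 * c * t + b)]

theorem strictMonoOn_three_terms {A B C : ℝ} (k : ℕ) (hC : 0 < C)
    (hdisc : ((k + 2) * B) ^ 2 < 4 * ((k + 1) * A) * ((k + 3) * C)) :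
    StrictMonoOn (fun y : ℝ => A * y ^ (k + 1) + B * y ^ (k + 2) + C * y ^ (k + 3)) (Ioi 0) := by
  refine strictMonoOn_of_deriv_pos (convex_Ioi 0) (by fun_prop) fun y hy => ?_
  rw [interior_Ioi] at hy
  have hderiv : HasDerivAt (fun y : ℝ => A * y ^ (k + 1) + B * y ^ (k + 2) + C * y ^ (k + 3))
      (y ^ k * ((k + 1) * A + (k + 2) * B * y + (k + 3) * C * y ^ 2)) y := by
    refine ((((hasDerivAt_pow (k + 1) y).const_mul A).add
      ((hasDerivAt_pow (k + 2) y).const_mul B)).add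
      ((hasDerivAt_pow (k + 3) y).const_mul C)).congr_deriv ?_
    rw [Nat.add_sub_cancel, show k + 2 - 1 = k + 1 from rfl, show k + 3 - 1 = k + 2 from rfl]
    push_cast
    ring
  rw [hderiv.deriv]
  exact mul_pos (pow_pos hy k) (quadratic_pos_of_sq_lt (by positivity) (by linarith) y)

theorem sq_lt_four_mul_mul_of_turan {r s α β u₀ u₁ u₂ v₀ v₁ v₂ : ℝ} (hr : 3 ≤ r) (hs : 3 ≤ s)
    (hαβ : 1 / 2 ≤ α * β) (hu : r * u₁ ^ 2 < (r + 1) * (u₀ * u₂))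
    (hv : s * v₁ ^ 2 < (s + 1) * (v₀ * v₂)) :
    (r * (u₁ * v₁)) ^ 2 < 4 * ((r - 1) * (α * u₀ * v₂)) * ((r + 1) * (β * u₂ * v₀)) := by
  have hU : 0 < u₀ * u₂ := by nlinarith [sq_nonneg u₁]
  have hV : 0 < v₀ * v₂ := by nlinarith [sq_nonneg v₁]
  have hprod : (r * u₁ ^ 2) * (s * v₁ ^ 2) < ((r + 1) * (u₀ * u₂)) * ((s + 1) * (v₀ * v₂)) :=
    mul_lt_mul'' hu hv (by positivity) (by positivity)
  have hrs : r * (s + 1) ≤ 4 * (α * β) * ((r - 1) * s) := by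
    have hrs₀ : 0 ≤ (r - 1) * s := by nlinarith
    nlinarith [mul_nonneg (sub_nonneg.2 hr) (sub_nonneg.2 hs), mul_le_mul_of_nonneg_right hαβ hrs₀]
  refine lt_of_mul_lt_mul_left ?_ (by positivity : (0 : ℝ) ≤ s)
  calc s * (r * (u₁ * v₁)) ^ 2 = r * ((r * u₁ ^ 2) * (s * v₁ ^ 2)) := by ring
    _ < r * (((r + 1) * (u₀ * u₂)) * ((s + 1) * (v₀ * v₂))) := by gcongr
    _ = r * (s + 1) * ((r + 1) * (u₀ * u₂) * (v₀ * v₂)) := by ring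
    _ ≤ 4 * (α * β) * ((r - 1) * s) * ((r + 1) * (u₀ * u₂) * (v₀ * v₂)) := by gcongr
    _ = s * (4 * ((r - 1) * (α * u₀ * v₂)) * ((r + 1) * (β * u₂ * v₀))) := by ring

theorem stmt_8_general (r s : ℕ) (hr : Odd r) (hr3 : 3 ≤ r) (hs : Odd s) (hs3 : 3 ≤ s)
    (p q w α β : ℝ) (hp : 0 < p) (hp2 : p < 1/2) (hq : 1/2 < q) (hq1 : q < 1)
    (hw : 0 < w) (hβ : 0 < β) (hαβ : 1/2 ≤ α * β) :
    StrictMonoOn (fun y : ℝ =>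
      α * (1 / (Nat.factorial (r-1) : ℝ)) * (1 / (Nat.factorial (s+1) : ℝ)) *
        f p (r-1) * f q (s+1) * w^(s+1) * y^(r-1)
      + (1 / (Nat.factorial r : ℝ)) * (1 / (Nat.factorial s : ℝ)) *
        f p r * f q s * w^s * y^r
      + β * (1 / (Nat.factorial (r+1) : ℝ)) * (1 / (Nat.factorial (s-1) : ℝ)) *
        f p (r+1) * f q (s-1) * w^(s-1) * y^(r+1)) (Set.Ioi 0) := by
  obtain ⟨k, rfl⟩ : ∃ k, r = k + 2 := ⟨r - 2, by omega⟩
  obtain ⟨l, rfl⟩ : ∃ l, s = l + 2 := ⟨s - 2, by omega⟩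
  have hk : Even (k + 1) := by obtain ⟨t, ht⟩ := hr; exact ⟨t, by omega⟩
  have hl : Even (l + 1) := by obtain ⟨t, ht⟩ := hs; exact ⟨t, by omega⟩
  have hp1 : p < 1 := by linarith
  have hq0 : 0 < q := by linarith
  set u : ℕ → ℝ := fun i => f p i / (i)!
  set v : ℕ → ℝ := fun j => f q j * w ^ j / (j)!
  have hu : ((k : ℝ) + 2) * u (k + 2) ^ 2 < ((k : ℝ) + 2 + 1) * (u (k + 1) * u (k + 3)) := by
    have := mul_sq_div_factorial_lt (c := fun i => f p i) (sq_f_lt_f_mul_f hp hp1 hk)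
    push_cast at this ⊢; convert this using 2 <;> ring
  have hv : ((l : ℝ) + 2) * v (l + 2) ^ 2 < ((l : ℝ) + 2 + 1) * (v (l + 1) * v (l + 3)) := by
    have := mul_sq_div_factorial_lt (c := fun j => f q j * w ^ j)
      (sq_mul_pow_lt_of_sq_lt (l + 1) hw.ne' (sq_f_lt_f_mul_f hq0 hq1 hl))
    push_cast at this ⊢; convert this using 2 <;> ring
  have hC : 0 < β * u (k + 3) * v (l + 1) := by
    have hfp : 0 < f p (k + 3) := f_pos_of_even hp hp1 (hk.add even_two)
    have hfq : 0 < f q (l + 1) := f_pos_of_even hq0 hq1 hl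
    positivity
  have hdisc : ((k + 2) * (u (k + 2) * v (l + 2))) ^ 2
      < 4 * ((k + 1) * (α * u (k + 1) * v (l + 3))) * ((k + 3) * (β * u (k + 3) * v (l + 1))) := by
    have := sq_lt_four_mul_mul_of_turan (by exact_mod_cast hr3) (by exact_mod_cast hs3) hαβ hu hv
    linarith
  convert strictMonoOn_three_terms k hC hdisc using 1
  funext y
  simp only [u, v, show k + 2 - 1 = k + 1 from rfl, show l + 2 - 1 = l + 1 from rfl]
  ring

theorem stmt_8 (r s : ℕ) (hr : Odd r) (hr3 : 3 ≤ r) (hs : Odd s) (hs3 : 3 ≤ s)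
    (p q w α β : ℝ) (hp : 0 < p) (hp2 : p < 1/2) (hq : 1/2 < q) (hq1 : q < 1)
    (hw : 0 < w) (hα : 0 < α) (hβ : 0 < β) (hαβ : 1/2 ≤ α * β) :
    StrictMonoOn (fun y : ℝ =>
      α * (1 / (Nat.factorial (r-1) : ℝ)) * (1 / (Nat.factorial (s+1) : ℝ)) *
        f p (r-1) * f q (s+1) * w^(s+1) * y^(r-1)
      + (1 / (Nat.factorial r : ℝ)) * (1 / (Nat.factorial s : ℝ)) *
        f p r * f q s * w^s * y^r
      + β * (1 / (Nat.factorial (r+1) : ℝ)) * (1 / (Nat.factorial (s-1) : ℝ)) *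
        f p (r+1) * f q (s-1) * w^(s-1) * y^(r+1)) (Set.Ioi 0) :=
  stmt_8_general r s hr hr3 hs hs3 p q w α β hp hp2 hq hq1 hw hβ hαβ
end

section
/- Let a, b, c > 0 and r ≥ 3 an integer with 4ac/b² > r²/(r²−1). Then the function F(y) = a y^{r−1} − b y^r + c y^{r+1} is strictly increasing on (0, ∞). -/
theorem stmt_9 (a b c : ℝ) (ha : 0 < a) (hb : 0 < b) (hc : 0 < c)
    (r : ℕ) (hr : 3 ≤ r)
    (h : (r:ℝ)^2 / ((r:ℝ)^2 - 1) < 4*a*c / b^2) :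
    StrictMonoOn (fun y : ℝ => a * y^(r-1) - b * y^r + c * y^(r+1)) (Set.Ioi 0) := by
  have hr3 : (3:ℝ) ≤ (r:ℝ) := by exact_mod_cast hr
  have hden : (0:ℝ) < (r:ℝ)^2 - 1 := by nlinarith
  have hkey : (r:ℝ)^2 * b^2 < 4*a*c*((r:ℝ)^2 - 1) := by
    rw [div_lt_div_iff₀ hden (by positivity)] at h
    nlinarith
  apply strictMonoOn_of_deriv_pos (convex_Ioi 0)
  · fun_prop
  · intro y hy
    rw [interior_Ioi] at hy
    have hy0 : 0 < y := hy
    have hd : HasDerivAt (fun y : ℝ => a * y^(r-1) - b * y^r + c * y^(r+1))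
        (a * (((r-1:ℕ):ℝ) * y^(r-1-1)) - b * ((r:ℝ) * y^(r-1)) + c * (((r+1:ℕ):ℝ) * y^(r+1-1))) y := by
      exact (((hasDerivAt_pow (r-1) y).const_mul a).sub
        ((hasDerivAt_pow r y).const_mul b)).add ((hasDerivAt_pow (r+1) y).const_mul c)
    rw [hd.deriv]
    have c1 : ((r - 1 : ℕ) : ℝ) = (r:ℝ) - 1 := by
      have h1 : 1 ≤ r := by omega
      push_cast [h1]; ring
    have e1 : r - 1 - 1 = r - 2 := by omega
    have e2 : y ^ (r-1) = y^(r-2) * y := by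
      rw [← pow_succ]; congr 1; omega
    have e3 : y ^ (r+1-1) = y^(r-2) * y^2 := by
      rw [← pow_add]; congr 1; omega
    rw [e1, e2, e3, c1]
    have hyp : 0 < y ^ (r-2) := pow_pos hy0 _
    have quad : 0 < ((r:ℝ)-1)*a - (r:ℝ)*b*y + ((r:ℝ)+1)*c*y^2 := by
      nlinarith [sq_nonneg (2*((r:ℝ)+1)*c*y - (r:ℝ)*b), hkey, mul_pos (show (0:ℝ) < (r:ℝ)+1 by linarith) hc]
    push_cast
    nlinarith [mul_pos hyp quad]
end

section
/- Let γ > 0 and Δ = min{1/4, 1/(2(1+γ))}. For all 0 ≤ δ < Δ and all 0 ≤ r ≤ q with q ∈ (0,1): 2δ·r + 1 + γ·r(1−r)·4δ² < q + 1 + γ·q(1−q). -/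
/-!
Both sides are `mean + γ · variance` of a two-point distribution: values `1, 1 + 2δ` with weight
`r` on the larger one, against values `1, 2` with weight `q`. For `q ≤ 1/2` the variance `r(1-r)`
is at most `q(1-q)` and, as `δ < 1/4`, the mean gap `2δr` is below `q`. For `q > 1/2` we only use
`r(1-r) ≤ 1/4` and `δ² ≤ δ`, so the left side is at most `1 + δ(2q + γ)`, and
`δ < 1/(2(1+γ))` gives `δ(2q + γ) < (2q + γ)/(2(1+γ)) ≤ q`.
-/

lemma mul_one_sub_le_quarter (x : ℝ) : x * (1 - x) ≤ 1 / 4 := by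
  nlinarith [sq_nonneg (x - 1 / 2)]

lemma mul_one_sub_le_mul_one_sub {r q : ℝ} (hrq : r ≤ q) (hqr : q + r ≤ 1) :
    r * (1 - r) ≤ q * (1 - q) := by
  nlinarith [mul_nonneg (sub_nonneg.2 hrq) (sub_nonneg.2 hqr)]

lemma two_point_lt_of_le_half {γ δ r q : ℝ} (hγ : 0 ≤ γ) (hδ0 : 0 ≤ δ) (hδ : δ < 1 / 4)
    (hr : 0 ≤ r) (hrq : r ≤ q) (hq0 : 0 < q) (hq : q ≤ 1 / 2) :
    2 * δ * r + 1 + γ * (r * (1 - r)) * (4 * δ ^ 2) < q + 1 + γ * (q * (1 - q)) := by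
  have hvar : r * (1 - r) ≤ q * (1 - q) := mul_one_sub_le_mul_one_sub hrq (by linarith)
  have hδsq : 4 * δ ^ 2 ≤ 1 := by nlinarith
  have hvar_q : 0 ≤ q * (1 - q) := mul_nonneg hq0.le (by linarith)
  calc 2 * δ * r + 1 + γ * (r * (1 - r)) * (4 * δ ^ 2)
      ≤ 2 * δ * q + 1 + γ * (q * (1 - q)) * 1 := by gcongr
    _ < q + 1 + γ * (q * (1 - q)) := by nlinarith

lemma two_point_lt_of_half_lt {γ δ r q : ℝ} (hγ : 0 ≤ γ) (hδ0 : 0 ≤ δ)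
    (hδ : δ < 1 / (2 * (1 + γ))) (hrq : r ≤ q) (hq : 1 / 2 < q) (hq1 : q < 1) :
    2 * δ * r + 1 + γ * (r * (1 - r)) * (4 * δ ^ 2) < q + 1 + γ * (q * (1 - q)) := by
  have hδ1 : δ ≤ 1 := by
    have : 1 / (2 * (1 + γ)) ≤ 1 := by
      rw [div_le_one (by positivity)]; linarith
    linarith
  have hδsq : δ ^ 2 ≤ δ := by nlinarith
  have hspread : δ * (2 * q + γ) < q := by
    calc δ * (2 * q + γ) < 1 / (2 * (1 + γ)) * (2 * q + γ) := by gcongr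
      _ ≤ q := by
        rw [one_div_mul_eq_div, div_le_iff₀ (by positivity)]
        nlinarith
  have hvar_r := mul_one_sub_le_quarter r
  have hvar_q : 0 ≤ q * (1 - q) := mul_nonneg (by linarith) (by linarith)
  calc 2 * δ * r + 1 + γ * (r * (1 - r)) * (4 * δ ^ 2)
      ≤ 2 * δ * q + 1 + γ * (1 / 4) * (4 * δ) := by gcongr
    _ = 1 + δ * (2 * q + γ) := by ring
    _ < q + 1 + γ * (q * (1 - q)) := by nlinarith

theorem stmt_12 (γ : ℝ) (hγ : 0 < γ) :
    ∀ δ : ℝ, 0 ≤ δ → δ < min (1/4) (1/(2*(1+γ))) →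
    ∀ r q : ℝ, 0 ≤ r → r ≤ q → 0 < q → q < 1 →
      2*δ*r + 1 + γ*(r*(1-r))*(4*δ^2) < q + 1 + γ*(q*(1-q)) := by
  intro δ hδ0 hδ r q hr hrq hq0 hq1
  rcases le_or_gt q (1 / 2) with hq | hq
  · exact two_point_lt_of_le_half hγ.le hδ0 (hδ.trans_le (min_le_left _ _)) hr hrq hq0 hq
  · exact two_point_lt_of_half_lt hγ.le hδ0 (hδ.trans_le (min_le_right _ _)) hrq hq hq1
end

section
/- The following reduction is correct: given a 3-dimensional matching instance ⟨W, X, Y, M⟩ with |W|=|X|=|Y|=q, M = {m₁,…,m_k}, m_i = (w_{f(i)}, x_{g(i)}, y_{h(i)}), define n = k+1, m = 3q, and a_{ij} ∈ {0,1} for i ≤ k indicating whether element m_i covers coordinate j (in the natural indexing of the 3q coordinates), and a_{k+1,j} = 2·b_j where b_j = Σ_{i≤k} a_{ij}. Then M contains a perfect 3-dimensional matching if and only if there exists a subset I ⊂ [n] such that for every j ∈ [m], Σ_{i∈I} a_{ij} = 3 + 2·Σ_{i∉I} a_{ij}. -/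
/-- `acoef i (c, j) = 1` iff element `i` of the 3DM instance covers the `j`-th
element of the `c`-th coordinate set (`c = 0`: W, `c = 1`: X, `c = 2`: Y). -/
def acoef {q k : ℕ} (fW gX hY : Fin k → Fin q) (i : Fin k) (j : Fin 3 × Fin q) : ℕ :=
  if (j.1 = 0 ∧ fW i = j.2) ∨ (j.1 = 1 ∧ gX i = j.2) ∨ (j.1 = 2 ∧ hY i = j.2) then 1 else 0

def bcoef {q k : ℕ} (fW gX hY : Fin k → Fin q) (j : Fin 3 × Fin q) : ℕ :=
  ∑ i, acoef fW gX hY i j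

/-- The MULTIBALANCED PARTITION instance: `a_{ij}` for `i ≤ k`, and
`a_{k+1,j} = 2 b_j`. -/
def Acoef {q k : ℕ} (fW gX hY : Fin k → Fin q) (i : Fin (k+1)) (j : Fin 3 × Fin q) : ℕ :=
  if h : (i : ℕ) < k then acoef fW gX hY ⟨i, h⟩ j else 2 * bcoef fW gX hY j

section helpers
variable {q k : ℕ} (fW gX hY : Fin k → Fin q)

lemma acoef_apply (i : Fin k) (j : Fin 3 × Fin q) :
    acoef fW gX hY i j = if ![fW, gX, hY] j.1 i = j.2 then 1 else 0 := by
  obtain ⟨c, j⟩ := j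
  fin_cases c <;> simp [acoef]

lemma sum_acoef (I : Finset (Fin k)) (c : Fin 3) (j2 : Fin q) :
    ∑ i ∈ I, acoef fW gX hY i (c, j2)
      = (I.filter fun i => ![fW, gX, hY] c i = j2).card := by
  rw [Finset.card_filter]
  exact Finset.sum_congr rfl fun i _ => acoef_apply ..

lemma sum_Acoef_insert (I : Finset (Fin k)) (j : Fin 3 × Fin q) :
    ∑ i ∈ insert (Fin.last k) (I.map Fin.castSuccEmb), Acoef fW gX hY i j
      = 2 * bcoef fW gX hY j + ∑ i ∈ I, acoef fW gX hY i j := by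
  have hnot : Fin.last k ∉ I.map Fin.castSuccEmb := by
    simp only [Finset.mem_map, Fin.castSuccEmb, not_exists, not_and]
    intro i _ h
    exact (Fin.castSucc_lt_last i).ne h
  rw [Finset.sum_insert hnot, Finset.sum_map]
  congr 1
  · simp [Acoef]
  · exact Finset.sum_congr rfl fun i _ => by simp [Acoef, Fin.castSuccEmb, i.isLt]

lemma sum_Acoef_univ (j : Fin 3 × Fin q) :
    ∑ i, Acoef fW gX hY i j = 3 * bcoef fW gX hY j := by
  rw [Fin.sum_univ_castSucc]
  have : ∀ i : Fin k, Acoef fW gX hY i.castSucc j = acoef fW gX hY i j := by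
    intro i; simp [Acoef, i.isLt]
  simp [this, Acoef, bcoef]
  ring

lemma good_iff (v : Fin 3 → Fin k → Fin q) (I : Finset (Fin k)) :
    (I.card = q ∧ Set.InjOn (v 0) ↑I ∧ Set.InjOn (v 1) ↑I ∧ Set.InjOn (v 2) ↑I) ↔
    (∀ (c : Fin 3) (j : Fin q), (I.filter fun i => v c i = j).card = 1) := by
  constructor
  · rintro ⟨hcard, h0, h1, h2⟩ c j
    have hinj : Set.InjOn (v c) ↑I := by fin_cases c <;> assumption
    have himg : Finset.image (v c) I = Finset.univ := by
      apply Finset.eq_univ_of_card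
      rw [Finset.card_image_of_injOn hinj, hcard]; simp
    have hj : j ∈ Finset.image (v c) I := himg ▸ Finset.mem_univ j
    obtain ⟨i, hi, hij⟩ := Finset.mem_image.mp hj
    rw [Finset.card_eq_one]
    refine ⟨i, Finset.eq_singleton_iff_unique_mem.mpr ⟨Finset.mem_filter.mpr ⟨hi, hij⟩, ?_⟩⟩
    intro x hx
    obtain ⟨hxI, hxj⟩ := Finset.mem_filter.mp hx
    exact hinj hxI hi (hxj.trans hij.symm)
  · intro h
    have hinj : ∀ c : Fin 3, Set.InjOn (v c) ↑I := by
      intro c x hx y hy hxy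
      have h1 := h c (v c y)
      rw [Finset.card_eq_one] at h1
      obtain ⟨z, hz⟩ := h1
      have hxz : x ∈ I.filter fun i => v c i = v c y :=
        Finset.mem_filter.mpr ⟨hx, hxy⟩
      have hyz : y ∈ I.filter fun i => v c i = v c y :=
        Finset.mem_filter.mpr ⟨hy, rfl⟩
      rw [hz, Finset.mem_singleton] at hxz hyz
      rw [hxz, hyz]
    refine ⟨?_, hinj 0, hinj 1, hinj 2⟩
    have := Finset.card_eq_sum_card_fiberwise
      (f := v 0) (s := I) (t := Finset.univ) (fun x _ => Finset.mem_univ _)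
    simp only [this, h 0]
    simp

end helpers

theorem stmt_17 (q k : ℕ) (fW gX hY : Fin k → Fin q) :
    (∃ I : Finset (Fin k), I.card = q ∧
        Set.InjOn fW ↑I ∧ Set.InjOn gX ↑I ∧ Set.InjOn hY ↑I) ↔
    (∃ I : Finset (Fin (k+1)), ∀ j : Fin 3 × Fin q,
        ∑ i ∈ I, Acoef fW gX hY i j = 3 + 2 * ∑ i ∈ Iᶜ, Acoef fW gX hY i j) := by
  have hv0 : (![fW, gX, hY] : Fin 3 → Fin k → Fin q) 0 = fW := rfl
  have hv1 : (![fW, gX, hY] : Fin 3 → Fin k → Fin q) 1 = gX := rfl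
  have hv2 : (![fW, gX, hY] : Fin 3 → Fin k → Fin q) 2 = hY := rfl
  constructor
  · rintro ⟨I, hI⟩
    have hgood : ∀ (c : Fin 3) (j : Fin q),
        (I.filter fun i => ![fW, gX, hY] c i = j).card = 1 := by
      rw [← good_iff]; simpa [hv0, hv1, hv2] using hI
    refine ⟨insert (Fin.last k) (I.map Fin.castSuccEmb), fun j => ?_⟩
    obtain ⟨c, j2⟩ := j
    have hS : ∑ i ∈ insert (Fin.last k) (I.map Fin.castSuccEmb),
        Acoef fW gX hY i (c, j2) = 2 * bcoef fW gX hY (c, j2) + 1 := by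
      rw [sum_Acoef_insert, sum_acoef, hgood]
    have hb : 1 ≤ bcoef fW gX hY (c, j2) := by
      have := Finset.card_le_card
        (Finset.filter_subset_filter (fun i => ![fW, gX, hY] c i = j2)
          (Finset.subset_univ I))
      rw [hgood] at this
      calc 1 ≤ _ := this
        _ = bcoef fW gX hY (c, j2) := by rw [bcoef, sum_acoef]
    have htot : ∑ i ∈ insert (Fin.last k) (I.map Fin.castSuccEmb), Acoef fW gX hY i (c, j2)
        + ∑ i ∈ (insert (Fin.last k) (I.map Fin.castSuccEmb))ᶜ, Acoef fW gX hY i (c, j2)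
        = 3 * bcoef fW gX hY (c, j2) := by
      rw [Finset.sum_add_sum_compl, sum_Acoef_univ]
    omega
  · rintro ⟨I', hI'⟩
    rcases Nat.eq_zero_or_pos q with hq | hq
    · subst hq
      exact ⟨∅, by simp, by simp, by simp, by simp⟩
    have hlast : Fin.last k ∈ I' := by
      by_contra hlast
      set j₀ : Fin 3 × Fin q := (0, ⟨0, hq⟩)
      have hsub : I' ⊆ Finset.univ.erase (Fin.last k) := fun x hx =>
        Finset.mem_erase.mpr ⟨fun h => hlast (h ▸ hx), Finset.mem_univ x⟩
      have hle : ∑ i ∈ I', Acoef fW gX hY i j₀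
          ≤ ∑ i ∈ Finset.univ.erase (Fin.last k), Acoef fW gX hY i j₀ :=
        Finset.sum_le_sum_of_subset hsub
      have herase : ∑ i ∈ Finset.univ.erase (Fin.last k), Acoef fW gX hY i j₀
          + Acoef fW gX hY (Fin.last k) j₀ = 3 * bcoef fW gX hY j₀ := by
        rw [Finset.sum_erase_add _ _ (Finset.mem_univ _), sum_Acoef_univ]
      have hAl : Acoef fW gX hY (Fin.last k) j₀ = 2 * bcoef fW gX hY j₀ := by
        simp [Acoef]
      have htot : ∑ i ∈ I', Acoef fW gX hY i j₀ + ∑ i ∈ I'ᶜ, Acoef fW gX hY i j₀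
          = 3 * bcoef fW gX hY j₀ := by
        rw [Finset.sum_add_sum_compl, sum_Acoef_univ]
      have heq := hI' j₀
      omega
    set I : Finset (Fin k) := Finset.univ.filter (fun i => i.castSucc ∈ I') with hIdef
    have hI'eq : I' = insert (Fin.last k) (I.map Fin.castSuccEmb) := by
      ext x
      induction x using Fin.lastCases with
      | last => simp [hlast]
      | cast i =>
        simp only [hIdef, Finset.mem_insert, Finset.mem_map, Finset.mem_filter,
          Finset.mem_univ, true_and, Fin.castSuccEmb]
        constructor
        · intro h; exact Or.inr ⟨i, h, rfl⟩
        · rintro (h | ⟨a, ha, hae⟩)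
          · exact absurd h (Fin.castSucc_lt_last i).ne
          · have : a = i := Fin.castSucc_injective k hae
            exact this ▸ ha
    have hgood : ∀ (c : Fin 3) (j : Fin q),
        (I.filter fun i => ![fW, gX, hY] c i = j).card = 1 := by
      intro c j2
      have heq := hI' (c, j2)
      rw [hI'eq, sum_Acoef_insert] at heq
      have htot : ∑ i ∈ I', Acoef fW gX hY i (c, j2) + ∑ i ∈ I'ᶜ, Acoef fW gX hY i (c, j2)
          = 3 * bcoef fW gX hY (c, j2) := by
        rw [Finset.sum_add_sum_compl, sum_Acoef_univ]
      rw [hI'eq, sum_Acoef_insert] at htot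
      rw [← sum_acoef]
      omega
    refine ⟨I, ?_⟩
    have := (good_iff ![fW, gX, hY] I).mpr hgood
    simpa [hv0, hv1, hv2] using this
end

section
/- The valuation E − Var is not strictly convex with respect to payoff distributions (FP-strict convexity): there exist a finite game with players 1,2, a mixed strategy x₂ for player 2, and two pure strategies x₁', x₁'' for player 1 inducing distinct payoff distributions P₁(x₁', x₂) ≠ P₁(x₁'', x₂), such that for every α ∈ (0,1), V₁(α x₁' + (1−α) x₁'', x₂) = α V₁(x₁', x₂) + (1−α) V₁(x₁'', x₂), where V₁ = E₁ − Var₁. Concretely, with payoffs u₁(s₁,·) = (9/2, 7/2, 0, 0) and u₁(s₂,·) = (0, 0, 5, 15/4) and x₂ = (1/4, 1/4, 1/10, 2/5), both pure strategies yield expectation 2 and second moment 8 + 1/8, and all mixtures yield the same value of E − Var. -/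
theorem stmt_18 :
    let u : Fin 2 → Fin 4 → ℝ := ![![9/2, 7/2, 0, 0], ![0, 0, 5, 15/4]]
    let x2 : Fin 4 → ℝ := ![1/4, 1/4, 1/10, 2/5]
    let E : ℝ → ℝ := fun a => ∑ t, (a * u 0 t + (1-a) * u 1 t) * x2 t
    let M2 : ℝ → ℝ := fun a => ∑ t, (a * (u 0 t)^2 + (1-a) * (u 1 t)^2) * x2 t
    let V : ℝ → ℝ := fun a => E a - (M2 a - (E a)^2)
    ((∑ t, if u 0 t = 5 then x2 t else 0) ≠ (∑ t, if u 1 t = 5 then x2 t else 0)) ∧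
    E 1 = 2 ∧ E 0 = 2 ∧ M2 1 = 8 + 1/8 ∧ M2 0 = 8 + 1/8 ∧
    (∀ a : ℝ, 0 < a → a < 1 → V a = a * V 1 + (1-a) * V 0) := by
  refine ⟨?_, ?_, ?_, ?_, ?_, ?_⟩ <;>
    simp only [Fin.sum_univ_four, Matrix.cons_val_zero, Matrix.cons_val_one, Matrix.head_cons,
      Matrix.cons_val_fin_one, Matrix.cons_val_two, Matrix.tail_cons, Matrix.cons_val_three] <;>
    norm_num
  intro a _ _
  ring
end
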